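/- For any binary predictor f : X → {0,1} and any function γ : X → [0,1] with mean γ̄ = E[γ(x)], there exists a binary partition π : X → {0,1} of the instance space such that E_{π(x)} |C(f(x), γ(x); π(x))| ≥ (1/2) · E|γ(x) − γ̄| · min{E[f], 1 − E[f]}, where C(·,·; π(x)=c) denotes conditional covariance given π(x)=c. -/

import Mathlib

/-!
Let `A = {f = 1}`, `B = {γ̄ ≤ γ}`, `g = γ - γ̄`, and let `pᵢ`, `sᵢ` be the mass of, and the integral
of `g` over, the cells `A ∩ B`, `A \ B`, `B \ A`, `(A ∪ B)ᶜ`. Take `W = (A ∩ B) ∪ (A ∪ B)ᶜ`, the set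
where `f` agrees with the sign of `g`. On a block `P ∪ Q` with `P ⊆ A` and `Q ⊆ Aᶜ` the weighted
conditional covariance is `(s_P p_Q - p_P s_Q) / (p_P + p_Q)`, and on both `W` and `Wᶜ` the two
products have the same sign. So the `W`-term is the average of `s₁` and `-s₄` with weights `p₄, p₁`
and the `Wᶜ`-term that of `s₃` and `-s₂` with weights `p₂, p₃`. As `E g = 0`,
`s₁ + s₃ = -s₂ - s₄ = ½ E|g|`, so the sum is at least `½ E|g|` times the sum of the smaller
normalized weight on each pairing; as both blocks have mass at most `1`, normalized weights dominate
masses, and that sum is at least `min (p₁ + p₂) (p₃ + p₄) = min (E f) (1 - E f)`.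
-/

open MeasureTheory

/-- Covariance of `f` and `g` conditioned on the set `W` (junk value `0` when `μ W = 0`,
since integrals over a null set vanish and division by zero is zero in Lean). -/
noncomputable def condCov {X : Type*} [MeasurableSpace X] (μ : Measure X)
    (f g : X → ℝ) (W : Set X) : ℝ :=
  (∫ x in W, f x * g x ∂μ) / (μ W).toReal -
    ((∫ x in W, f x ∂μ) / (μ W).toReal) * ((∫ x in W, g x ∂μ) / (μ W).toReal)

lemma indicator_preimage_one_eq {X : Type*} {f : X → ℝ} (hf : ∀ x, f x = 0 ∨ f x = 1) :
    (f ⁻¹' {1}).indicator 1 = f := by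
  ext x
  rcases hf x with hx | hx <;> simp [hx]

lemma measureReal_mul_condCov_indicator_one {X : Type*} [MeasurableSpace X] {μ : Measure X}
    [IsFiniteMeasure μ] {A : Set X} (hA : MeasurableSet A) (W : Set X) {γ : X → ℝ}
    (hγ : Integrable γ μ) (c : ℝ) :
    μ.real W * condCov μ (A.indicator 1) γ W =
      ((∫ x in W ∩ A, γ x - c ∂μ) * μ.real (W \ A) -
        μ.real (W ∩ A) * ∫ x in W \ A, γ x - c ∂μ) / (μ.real (W ∩ A) + μ.real (W \ A)) := by
  have hprod : ∫ x in W, A.indicator 1 x * γ x ∂μ = ∫ x in W ∩ A, γ x ∂μ := by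
    rw [← setIntegral_indicator hA]
    congr 1 with x
    by_cases hx : x ∈ A <;> simp [hx]
  have hind : ∫ x in W, A.indicator 1 x ∂μ = μ.real (W ∩ A) := by
    rw [setIntegral_indicator hA, Pi.one_def, setIntegral_const, smul_eq_mul, mul_one]
  have hsub : ∀ S, ∫ x in S, γ x - c ∂μ = ∫ x in S, γ x ∂μ - μ.real S * c := fun S ↦ by
    rw [integral_sub hγ.integrableOn (integrable_const c), setIntegral_const, smul_eq_mul]
  rw [condCov, ← measureReal_def, hprod, hind, hsub, hsub,
    ← integral_inter_add_sdiff hA (hγ.integrableOn (s := W)),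
    ← measureReal_inter_add_sdiff (s := W) hA]
  rcases eq_or_ne (μ.real (W ∩ A) + μ.real (W \ A)) 0 with hW | hW
  · simp [hW]
  · field_simp
    ring

section FourCells

variable {X : Type*} [MeasurableSpace X] {μ : Measure X} {A B : Set X}

lemma integral_eq_sum_four_cells (hA : MeasurableSet A) (hB : MeasurableSet B) {h : X → ℝ}
    (hh : Integrable h μ) :
    ∫ x, h x ∂μ = ∫ x in A ∩ B, h x ∂μ + ∫ x in A \ B, h x ∂μ + ∫ x in B \ A, h x ∂μ +
      ∫ x in (A ∪ B)ᶜ, h x ∂μ := by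
  have hBA : Aᶜ ∩ B = B \ A := by rw [Set.inter_comm, Set.sdiff_eq]
  have hAB : Aᶜ \ B = (A ∪ B)ᶜ := by rw [Set.compl_union, Set.sdiff_eq]
  rw [← integral_add_compl hA hh, ← integral_inter_add_sdiff hB (hh.integrableOn (s := A)),
    ← integral_inter_add_sdiff hB (hh.integrableOn (s := Aᶜ)), hBA, hAB, ← add_assoc]

lemma integral_abs_sub_eq_sum_four_cells [IsFiniteMeasure μ] (hA : MeasurableSet A)
    {γ : X → ℝ} (hγ : Integrable γ μ) {c : ℝ} (hB : B = {x | c ≤ γ x}) (hBm : MeasurableSet B) :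
    ∫ x, |γ x - c| ∂μ = ∫ x in A ∩ B, γ x - c ∂μ - ∫ x in A \ B, γ x - c ∂μ +
      ∫ x in B \ A, γ x - c ∂μ - ∫ x in (A ∪ B)ᶜ, γ x - c ∂μ := by
  subst hB
  have hg : Integrable (fun x ↦ γ x - c) μ := hγ.sub (integrable_const c)
  have hpos : ∀ S ⊆ {x | c ≤ γ x}, MeasurableSet S →
      ∫ x in S, |γ x - c| ∂μ = ∫ x in S, γ x - c ∂μ :=
    fun S hS hSm ↦ setIntegral_congr_fun hSm fun x hx ↦ abs_of_nonneg (sub_nonneg.2 (hS hx))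
  have hneg : ∀ S ⊆ {x | c ≤ γ x}ᶜ, MeasurableSet S →
      ∫ x in S, |γ x - c| ∂μ = -∫ x in S, γ x - c ∂μ := fun S hS hSm ↦ by
    rw [← integral_neg]
    exact setIntegral_congr_fun hSm fun x hx ↦ abs_of_neg (sub_neg.2 (not_le.1 (hS hx)))
  rw [integral_eq_sum_four_cells hA hBm hg.abs, hpos _ Set.inter_subset_right (hA.inter hBm),
    hneg _ (fun x hx ↦ hx.2) (hA.diff hBm), hpos _ Set.sdiff_subset (hBm.diff hA),
    hneg _ (Set.compl_subset_compl.2 Set.subset_union_right) (hA.union hBm).compl]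
  ring

end FourCells

lemma min_le_min_add_min_of_weights {p₁ p₂ p₃ p₄ a b c d : ℝ} (hab : a + b = 1)
    (hcd : c + d = 1) (ha : p₄ ≤ a) (hb : p₁ ≤ b) (hc : p₂ ≤ c) (hd : p₃ ≤ d) :
    min (p₁ + p₂) (p₃ + p₄) ≤ min a c + min b d := by
  rcases min_cases a c with ⟨hac, -⟩ | ⟨hac, -⟩ <;>
    rcases min_cases b d with ⟨hbd, -⟩ | ⟨hbd, -⟩ <;>
    linarith [min_le_left (p₁ + p₂) (p₃ + p₄), min_le_right (p₁ + p₂) (p₃ + p₄)]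

section CellInequality

variable {p₁ p₂ p₃ p₄ s₁ s₂ s₃ s₄ : ℝ}

lemma cell_tradeoff_of_pos (hp₁ : 0 ≤ p₁) (hp₂ : 0 ≤ p₂) (hp₃ : 0 ≤ p₃) (hp₄ : 0 ≤ p₄)
    (hp : p₁ + p₂ + p₃ + p₄ = 1) (hq : 0 < p₁ + p₄) (hq' : 0 < p₂ + p₃)
    (hs₁ : 0 ≤ s₁) (hs₂ : s₂ ≤ 0) (hs₃ : 0 ≤ s₃) (hs₄ : s₄ ≤ 0) (hs : s₁ + s₂ + s₃ + s₄ = 0) :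
    (s₁ + s₃) * min (p₁ + p₂) (p₃ + p₄) ≤
      |(s₁ * p₄ - p₁ * s₄) / (p₁ + p₄)| + |(s₂ * p₃ - p₂ * s₃) / (p₂ + p₃)| := by
  set a := p₄ / (p₁ + p₄)
  set b := p₁ / (p₁ + p₄)
  set c := p₂ / (p₂ + p₃)
  set d := p₃ / (p₂ + p₃)
  have hm : min (p₁ + p₂) (p₃ + p₄) ≤ min a c + min b d :=
    min_le_min_add_min_of_weights (by rw [← add_div, add_comm, div_self hq.ne'])
      (by rw [← add_div, div_self hq'.ne'])
      (le_div_self hp₄ hq (by linarith)) (le_div_self hp₁ hq (by linarith))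
      (le_div_self hp₂ hq' (by linarith)) (le_div_self hp₃ hq' (by linarith))
  have hW : (s₁ * p₄ - p₁ * s₄) / (p₁ + p₄) = s₁ * a + (-s₄) * b := by
    simp only [a, b]; field_simp; ring
  have hWc : (s₂ * p₃ - p₂ * s₃) / (p₂ + p₃) = -(s₃ * c + (-s₂) * d) := by
    simp only [c, d]; field_simp; ring
  rw [abs_of_nonneg (div_nonneg (by nlinarith) hq.le),
    abs_of_nonpos (div_nonpos_of_nonpos_of_nonneg (by nlinarith) hq'.le), hW, hWc, neg_neg]
  calc (s₁ + s₃) * min (p₁ + p₂) (p₃ + p₄)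
      ≤ (s₁ + s₃) * min a c + (-s₄ + -s₂) * min b d := by
        rw [show -s₄ + -s₂ = s₁ + s₃ by linarith, ← mul_add]; gcongr
    _ ≤ s₁ * a + (-s₄) * b + (s₃ * c + (-s₂) * d) := by
        nlinarith [min_le_left a c, min_le_right a c, min_le_left b d, min_le_right b d]

lemma cell_tradeoff (hp₁ : 0 ≤ p₁) (hp₂ : 0 ≤ p₂) (hp₃ : 0 ≤ p₃) (hp₄ : 0 ≤ p₄)
    (hp : p₁ + p₂ + p₃ + p₄ = 1)
    (hs₁ : 0 ≤ s₁) (hs₂ : s₂ ≤ 0) (hs₃ : 0 ≤ s₃) (hs₄ : s₄ ≤ 0) (hs : s₁ + s₂ + s₃ + s₄ = 0)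
    (h₁ : p₁ = 0 → s₁ = 0) (h₂ : p₂ = 0 → s₂ = 0) (h₃ : p₃ = 0 → s₃ = 0) (h₄ : p₄ = 0 → s₄ = 0) :
    (1 / 2) * (s₁ - s₂ + s₃ - s₄) * min (p₁ + p₂) (1 - (p₁ + p₂)) ≤
      |(s₁ * p₄ - p₁ * s₄) / (p₁ + p₄)| + |(s₂ * p₃ - p₂ * s₃) / (p₂ + p₃)| := by
  rw [show 1 - (p₁ + p₂) = p₃ + p₄ by linarith,
    show (1 / 2) * (s₁ - s₂ + s₃ - s₄) = s₁ + s₃ by linarith]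
  rcases (add_nonneg hp₁ hp₄).eq_or_lt with hq | hq
  · obtain ⟨rfl, rfl⟩ : p₁ = 0 ∧ p₄ = 0 := ⟨by linarith, by linarith⟩
    obtain ⟨rfl, rfl⟩ := And.intro (h₁ rfl) (h₄ rfl)
    simp only [zero_add, add_zero, mul_zero, sub_self, zero_div, abs_zero] at hp ⊢
    rw [hp, div_one, show s₂ * p₃ - p₂ * s₃ = -s₃ by linear_combination p₃ * hs - s₃ * hp,
      abs_neg, abs_of_nonneg hs₃]
    exact mul_le_of_le_one_right hs₃ ((min_le_left _ _).trans (by linarith))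
  rcases (add_nonneg hp₂ hp₃).eq_or_lt with hq' | hq'
  · obtain ⟨rfl, rfl⟩ : p₂ = 0 ∧ p₃ = 0 := ⟨by linarith, by linarith⟩
    obtain ⟨rfl, rfl⟩ := And.intro (h₂ rfl) (h₃ rfl)
    simp only [zero_add, add_zero, mul_zero, sub_self, zero_div, abs_zero] at hp hs ⊢
    rw [hp, div_one, show s₁ * p₄ - p₁ * s₄ = s₁ by linear_combination s₁ * hp - p₁ * hs,
      abs_of_nonneg hs₁]
    exact mul_le_of_le_one_right hs₁ ((min_le_left _ _).trans (by linarith))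
  exact cell_tradeoff_of_pos hp₁ hp₂ hp₃ hp₄ hp hq hq' hs₁ hs₂ hs₃ hs₄ hs

end CellInequality

section Partition

variable {X : Type*} [MeasurableSpace X] {μ : Measure X} [IsProbabilityMeasure μ]
  {A B : Set X} {γ : X → ℝ} {c : ℝ}

lemma tradeoff_four_cells (hA : MeasurableSet A) (hγ : Integrable γ μ) (hc : ∫ x, γ x ∂μ = c)
    (hB : B = {x | c ≤ γ x}) (hBm : MeasurableSet B) :
    (1 / 2) * (∫ x, |γ x - c| ∂μ) *
        min (μ.real (A ∩ B) + μ.real (A \ B)) (1 - (μ.real (A ∩ B) + μ.real (A \ B))) ≤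
      |((∫ x in A ∩ B, γ x - c ∂μ) * μ.real (A ∪ B)ᶜ -
          μ.real (A ∩ B) * ∫ x in (A ∪ B)ᶜ, γ x - c ∂μ) / (μ.real (A ∩ B) + μ.real (A ∪ B)ᶜ)| +
        |((∫ x in A \ B, γ x - c ∂μ) * μ.real (B \ A) -
          μ.real (A \ B) * ∫ x in B \ A, γ x - c ∂μ) / (μ.real (A \ B) + μ.real (B \ A))| := by
  subst hB
  have hg : Integrable (fun x ↦ γ x - c) μ := hγ.sub (integrable_const c)
  have hnull : ∀ S, μ.real S = 0 → ∫ x in S, γ x - c ∂μ = 0 :=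
    fun S hS ↦ setIntegral_measure_zero _ ((measureReal_eq_zero_iff (measure_ne_top μ S)).1 hS)
  rw [integral_abs_sub_eq_sum_four_cells hA hγ rfl hBm]
  refine cell_tradeoff measureReal_nonneg measureReal_nonneg measureReal_nonneg
    measureReal_nonneg ?_
    (setIntegral_nonneg (hA.inter hBm) fun x hx ↦ sub_nonneg.2 hx.2)
    (setIntegral_nonpos (hA.diff hBm) fun x hx ↦ (sub_neg.2 (not_le.1 hx.2)).le)
    (setIntegral_nonneg (hBm.diff hA) fun x hx ↦ sub_nonneg.2 hx.1)
    (setIntegral_nonpos (hA.union hBm).compl fun x hx ↦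
      (sub_neg.2 (not_le.1 fun h ↦ hx (Or.inr h))).le)
    ?_ (hnull _) (hnull _) (hnull _) (hnull _)
  · simpa using (integral_eq_sum_four_cells hA hBm (integrable_const (1 : ℝ)) (μ := μ)).symm
  · rw [← integral_eq_sum_four_cells hA hBm hg, integral_sub hγ (integrable_const c), hc]
    simp

theorem exists_measurableSet_tradeoff_indicator_one (hA : MeasurableSet A)
    (hγm : Measurable γ) (hγ : Integrable γ μ) (hc : ∫ x, γ x ∂μ = c) :
    ∃ W : Set X, MeasurableSet W ∧
      (1 / 2) * (∫ x, |γ x - c| ∂μ) * min (μ.real A) (1 - μ.real A) ≤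
        μ.real W * |condCov μ (A.indicator 1) γ W| +
          μ.real Wᶜ * |condCov μ (A.indicator 1) γ Wᶜ| := by
  set B := {x | c ≤ γ x} with hB
  have hBm : MeasurableSet B := measurableSet_le measurable_const hγm
  set W := A ∩ B ∪ (A ∪ B)ᶜ
  obtain ⟨hW₁, hW₄, hWc₂, hWc₃⟩ :
      W ∩ A = A ∩ B ∧ W \ A = (A ∪ B)ᶜ ∧ Wᶜ ∩ A = A \ B ∧ Wᶜ \ A = B \ A := by
    refine ⟨?_, ?_, ?_, ?_⟩ <;> ext x <;> simp [W] <;> tauto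
  refine ⟨W, (hA.inter hBm).union (hA.union hBm).compl, ?_⟩
  have hweight : ∀ S, μ.real S * |condCov μ (A.indicator 1) γ S| =
      |μ.real S * condCov μ (A.indicator 1) γ S| :=
    fun S ↦ by rw [abs_mul, abs_of_nonneg measureReal_nonneg]
  rw [hweight, hweight, measureReal_mul_condCov_indicator_one hA _ hγ c,
    measureReal_mul_condCov_indicator_one hA _ hγ c, hW₁, hW₄, hWc₂, hWc₃,
    ← measureReal_inter_add_sdiff (s := A) hBm]
  exact tradeoff_four_cells hA hγ hc hB hBm

end Partition

theorem impossibility_tradeoff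
    {X : Type*} [MeasurableSpace X] (μ : Measure X) [IsProbabilityMeasure μ]
    (f : X → ℝ) (hf : Measurable f) (hf01 : ∀ x, f x = 0 ∨ f x = 1)
    (γ : X → ℝ) (hγ : Measurable γ) (hγ01 : ∀ x, γ x ∈ Set.Icc (0:ℝ) 1)
    (γbar : ℝ) (hγbar : γbar = ∫ x, γ x ∂μ) :
    ∃ W : Set X, MeasurableSet W ∧
      (1 / 2) * (∫ x, |γ x - γbar| ∂μ) * min (∫ x, f x ∂μ) (1 - ∫ x, f x ∂μ) ≤
        (μ W).toReal * |condCov μ f γ W| + (μ Wᶜ).toReal * |condCov μ f γ Wᶜ| := by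
  have hγi : Integrable γ μ := .of_bound hγ.aestronglyMeasurable 1 (ae_of_all _ fun x ↦
    abs_le.2 ⟨by linarith [(hγ01 x).1], (hγ01 x).2⟩)
  have hA : MeasurableSet (f ⁻¹' {1}) := hf (measurableSet_singleton 1)
  rw [← indicator_preimage_one_eq hf01, integral_indicator_one hA]
  exact exists_measurableSet_tradeoff_indicator_one hA hγ hγi hγbar.symm
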